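/- arXiv:1709.03765 — 2 statements merged into one kernel-verified Lean document; each statement's English description precedes it below -/
import Mathlib

section
/- Let F : F_{2^n} → F_{2^n}. Then 2^n · Σ_{v_1,v_2 ∈ F_{2^n}} Σ_{(x_1,x_2,x_3): v_1 x_1 + v_2 x_2 + (v_1+v_2) x_3 = 0} (−1)^{tr_n(v_1 F(x_1) + v_2 F(x_2) + (v_1+v_2) F(x_3))} − Σ_{v_1,v_2} W_F(0,v_1)·W_F(0,v_2)·W_F(0,v_1+v_2) + 2^{n+2}·Σ_{v ≠ 0} W_F(0,v)^2 − 2^{4n+2} + 2^{3n+2} ≥ 0, with equality if and only if F is an o-polynomial. -/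
open scoped Classical
open Finset

noncomputable instance (n : ℕ) : Fintype (GaloisField 2 n) := Fintype.ofFinite _

/-- The absolute trace from `GF(2^n)` to `GF(2)`. -/
noncomputable def tr (n : ℕ) (x : GaloisField 2 n) : ZMod 2 :=
  Algebra.trace (ZMod 2) (GaloisField 2 n) x

/-- The Walsh transform of `F` at `(u, v)`. -/
noncomputable def W (n : ℕ) (F : GaloisField 2 n → GaloisField 2 n)
    (u v : GaloisField 2 n) : ℤ :=
  ∑ x : GaloisField 2 n, (-1 : ℤ) ^ (tr n (v * F x) + tr n (u * x)).val

/-- `F` is an o-polynomial: for every nonzero `b` and every `a`, the equation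
`F x + b * x = a` has 0 or 2 solutions. -/
def IsOPoly (n : ℕ) (F : GaloisField 2 n → GaloisField 2 n) : Prop :=
  ∀ b : GaloisField 2 n, b ≠ 0 → ∀ a : GaloisField 2 n,
    Nat.card {x : GaloisField 2 n // F x + b * x = a} = 0 ∨
    Nat.card {x : GaloisField 2 n // F x + b * x = a} = 2

/-!
Write `q = 2^n`, `ψ = (-1)^tr` and `N_u(a)` for the number of solutions of `F x + u x = a`.
Orthogonality of `ψ` turns the Walsh sums into counts: `∑_v W(v)² = q ∑_a N_0(a)²` and
`∑_{v₁,v₂} W(v₁) W(v₂) W(v₁+v₂) = q² ∑_a N_0(a)³`; detecting the linear relation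
`v₁x₁ + v₂x₂ + (v₁+v₂)x₃ = 0` by a further sum over `u` makes the first term
`q² ∑_u ∑_a N_u(a)³`. Two distinct points `x ≠ y` share a fibre of `x ↦ F x + u x` for exactly
one `u`, so `∑_u ∑_a N_u(a)² = 2q² - q`. Together with `∑_a N_u(a) = q` this rewrites the
left-hand side as `q² ∑_{u ≠ 0} ∑_a N_u(a) (N_u(a) - 2)²`, a sum of nonnegative terms that vanishes
exactly when every `N_u(a)` with `u ≠ 0` is `0` or `2`.
-/

section Fibers

variable {ι κ : Type*} [Fintype ι]

noncomputable def fiberCard (G : ι → κ) (b : κ) : ℕ := #{i | G i = b}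

variable [Fintype κ]

lemma sum_fiberCard_mul (G : ι → κ) (g : κ → ℤ) :
    ∑ b, (fiberCard G b : ℤ) * g b = ∑ i, g (G i) := by
  rw [← Finset.sum_fiberwise' univ G g]
  simp [fiberCard]

lemma sum_fiberCard (G : ι → κ) : ∑ b, (fiberCard G b : ℤ) = Fintype.card ι := by
  simpa using sum_fiberCard_mul G 1

lemma sum_fiberCard_sq (G : ι → κ) :
    ∑ b, (fiberCard G b : ℤ) ^ 2 = ∑ i, ∑ j, if G j = G i then 1 else 0 := by
  simp_rw [sq, sum_fiberCard_mul G, fiberCard, card_filter]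
  push_cast
  rfl

lemma sum_fiberCard_mul_sub_two_sq (G : ι → κ) :
    ∑ b, (fiberCard G b : ℤ) * (fiberCard G b - 2) ^ 2
      = ∑ b, (fiberCard G b : ℤ) ^ 3 - 4 * ∑ b, (fiberCard G b : ℤ) ^ 2 + 4 * Fintype.card ι := by
  rw [← sum_fiberCard G, mul_sum, mul_sum, ← sum_sub_distrib, ← sum_add_distrib]
  exact sum_congr rfl fun b _ => by ring

end Fibers

section Field

variable {K : Type*} [Field K] [Fintype K]

lemma sum_boole_add_mul_eq_add_mul (F : K → K) (x y : K) :
    ∑ u : K, (if F y + u * y = F x + u * x then 1 else 0 : ℤ)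
      = if y = x then (Fintype.card K : ℤ) else 1 := by
  split_ifs with hyx
  · simp [hyx]
  · have hxy : y - x ≠ 0 := sub_ne_zero.mpr hyx
    have hu : ∀ u, F y + u * y = F x + u * x ↔ u = (F x - F y) / (y - x) := fun u => by
      rw [eq_div_iff hxy]
      constructor <;> intro h <;> linear_combination h
    simp_rw [hu, sum_ite_eq']
    simp

lemma sum_sum_fiberCard_add_mul_sq (F : K → K) :
    ∑ u : K, ∑ a : K, (fiberCard (fun x => F x + u * x) a : ℤ) ^ 2
      = 2 * (Fintype.card K : ℤ) ^ 2 - Fintype.card K := by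
  calc _ = ∑ x : K, ∑ y : K, ∑ u : K, (if F y + u * y = F x + u * x then 1 else 0 : ℤ) := by
        simp_rw [sum_fiberCard_sq]
        rw [sum_comm]
        exact sum_congr rfl fun x _ => sum_comm
    _ = ∑ x : K, ∑ y : K, if y = x then (Fintype.card K : ℤ) else 1 := by
        simp_rw [sum_boole_add_mul_eq_add_mul]
    _ = ∑ _x : K, (2 * (Fintype.card K : ℤ) - 1) := by
        refine sum_congr rfl fun x _ => ?_
        rw [← add_sum_erase _ _ (mem_univ x), if_pos rfl,
          sum_congr rfl fun y hy => if_neg (ne_of_mem_erase hy)]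
        simp only [sum_const, mem_univ, card_erase_of_mem, card_univ, Int.nsmul_eq_mul,
          Nat.cast_sub Fintype.card_pos, Nat.cast_one, mul_one]
        ring
    _ = _ := by
        simp only [sum_sub_distrib, sum_const, card_univ, Int.nsmul_eq_mul, mul_one]
        ring

end Field

section Walsh

variable {K : Type*} [Field K] [Fintype K]

noncomputable def walsh (ψ : AddChar K ℤ) (G : K → K) (v : K) : ℤ := ∑ x, ψ (v * G x)

variable {ψ : AddChar K ℤ}

lemma card_mul_sum_filter_eq_sum_walsh (hψ : ψ.IsPrimitive) (F : K → K) (c₁ c₂ c₃ : K) :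
    (Fintype.card K : ℤ) *
        ∑ x ∈ univ.filter (fun x : K × K × K => c₁ * x.1 + c₂ * x.2.1 + c₃ * x.2.2 = 0),
          ψ (c₁ * F x.1 + c₂ * F x.2.1 + c₃ * F x.2.2)
      = ∑ u, walsh ψ (fun x => F x + u * x) c₁ * walsh ψ (fun x => F x + u * x) c₂ *
          walsh ψ (fun x => F x + u * x) c₃ := by
  have hsplit : ∀ (u : K) (x : K × K × K),
      ψ (u * (c₁ * x.1 + c₂ * x.2.1 + c₃ * x.2.2)) * ψ (c₁ * F x.1 + c₂ * F x.2.1 + c₃ * F x.2.2)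
        = ψ (c₁ * (F x.1 + u * x.1)) * ψ (c₂ * (F x.2.1 + u * x.2.1)) *
            ψ (c₃ * (F x.2.2 + u * x.2.2)) := fun u x => by
    simp only [← AddChar.map_add_eq_mul]
    ring_nf
  -- Detect `c₁ x₁ + c₂ x₂ + c₃ x₃ = 0` by `∑ u, ψ (u * _)`; the product then splits coordinatewise.
  calc _ = ∑ x : K × K × K, ∑ u : K,
        ψ (u * (c₁ * x.1 + c₂ * x.2.1 + c₃ * x.2.2)) *
          ψ (c₁ * F x.1 + c₂ * F x.2.1 + c₃ * F x.2.2) := by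
        simp_rw [← sum_mul, AddChar.sum_mulShift _ hψ, mul_sum, sum_filter]
        refine sum_congr rfl fun x _ => ?_
        split_ifs <;> simp
    _ = _ := by
        simp_rw [hsplit, walsh]
        rw [sum_comm]
        refine sum_congr rfl fun u _ => ?_
        simp_rw [Fintype.sum_prod_type, sum_mul_sum, sum_mul]
        exact sum_congr rfl fun _ _ => sum_comm

lemma walsh_add (G : K → K) (v₁ v₂ : K) :
    walsh ψ G (v₁ + v₂) = ∑ z, ψ (v₁ * G z) * ψ (v₂ * G z) := by
  simp only [walsh, add_mul, AddChar.map_add_eq_mul]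

variable [CharP K 2]

lemma sum_walsh_mul (hψ : ψ.IsPrimitive) (G : K → K) (a : K) :
    ∑ v, walsh ψ G v * ψ (v * a) = Fintype.card K * fiberCard G a := by
  simp_rw [walsh, sum_mul, ← AddChar.map_add_eq_mul, ← mul_add]
  rw [sum_comm]
  simp_rw [AddChar.sum_mulShift _ hψ, CharTwo.add_eq_zero]
  simp [sum_ite, fiberCard, mul_comm]

lemma sum_walsh_sq (hψ : ψ.IsPrimitive) (G : K → K) :
    ∑ v, walsh ψ G v ^ 2 = Fintype.card K * ∑ a, (fiberCard G a : ℤ) ^ 2 := by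
  calc _ = ∑ x, ∑ v, walsh ψ G v * ψ (v * G x) := by
        rw [sum_comm]
        exact sum_congr rfl fun v _ => by rw [sq]; exact mul_sum _ _ _
    _ = _ := by
        simp_rw [sum_walsh_mul hψ, ← mul_sum, sq, sum_fiberCard_mul]

lemma sum_sum_walsh_mul_walsh_mul_walsh_add (hψ : ψ.IsPrimitive) (G : K → K) :
    ∑ v₁, ∑ v₂, walsh ψ G v₁ * walsh ψ G v₂ * walsh ψ G (v₁ + v₂)
      = Fintype.card K ^ 2 * ∑ a, (fiberCard G a : ℤ) ^ 3 := by
  calc _ = ∑ v₁, ∑ v₂, ∑ z, walsh ψ G v₁ * ψ (v₁ * G z) * (walsh ψ G v₂ * ψ (v₂ * G z)) := by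
        refine sum_congr rfl fun v₁ _ => sum_congr rfl fun v₂ _ => ?_
        rw [walsh_add, mul_sum]
        exact sum_congr rfl fun z _ => by ring
    _ = ∑ z, (∑ v₁, walsh ψ G v₁ * ψ (v₁ * G z)) * (∑ v₂, walsh ψ G v₂ * ψ (v₂ * G z)) := by
        simp_rw [sum_mul_sum]
        exact (sum_congr rfl fun v₁ _ => sum_comm).trans sum_comm
    _ = _ := by
        simp_rw [sum_walsh_mul hψ]
        rw [mul_sum, ← sum_fiberCard_mul G fun a =>
          (Fintype.card K * fiberCard G a : ℤ) * (Fintype.card K * fiberCard G a)]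
        exact sum_congr rfl fun a _ => by ring

end Walsh

section OPolynomial

variable {K : Type*} [Field K] [Fintype K] [CharP K 2] {ψ : AddChar K ℤ}

lemma card_mul_sum_sum_filter_eq_sum_sum_fiberCard_pow (hψ : ψ.IsPrimitive) (F : K → K) :
    (Fintype.card K : ℤ) * ∑ v₁, ∑ v₂,
        ∑ x ∈ univ.filter (fun x : K × K × K => v₁ * x.1 + v₂ * x.2.1 + (v₁ + v₂) * x.2.2 = 0),
          ψ (v₁ * F x.1 + v₂ * F x.2.1 + (v₁ + v₂) * F x.2.2)
      = Fintype.card K ^ 2 * ∑ u, ∑ a, (fiberCard (fun x => F x + u * x) a : ℤ) ^ 3 := by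
  calc _ = ∑ u, ∑ v₁, ∑ v₂, walsh ψ (fun x => F x + u * x) v₁ *
          walsh ψ (fun x => F x + u * x) v₂ * walsh ψ (fun x => F x + u * x) (v₁ + v₂) := by
        simp only [mul_sum univ, card_mul_sum_filter_eq_sum_walsh hψ]
        exact (sum_congr rfl fun v₁ _ => sum_comm).trans sum_comm
    _ = _ := by
        simp only [sum_sum_walsh_mul_walsh_mul_walsh_add hψ, mul_sum]

theorem walsh_combination_eq_sum_fiberCard (hψ : ψ.IsPrimitive) (F : K → K) :
    (Fintype.card K : ℤ) * (∑ v₁, ∑ v₂,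
        ∑ x ∈ univ.filter (fun x : K × K × K => v₁ * x.1 + v₂ * x.2.1 + (v₁ + v₂) * x.2.2 = 0),
          ψ (v₁ * F x.1 + v₂ * F x.2.1 + (v₁ + v₂) * F x.2.2))
      - ∑ v₁, ∑ v₂, walsh ψ F v₁ * walsh ψ F v₂ * walsh ψ F (v₁ + v₂)
      + 4 * Fintype.card K * ∑ v ∈ univ.filter (fun v : K => v ≠ 0), walsh ψ F v ^ 2
      - 4 * Fintype.card K ^ 4 + 4 * Fintype.card K ^ 3
    = Fintype.card K ^ 2 * ∑ u ∈ univ.erase 0, ∑ a,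
        (fiberCard (fun x => F x + u * x) a : ℤ) *
          (fiberCard (fun x => F x + u * x) a - 2) ^ 2 := by
  have hwalsh_zero : walsh ψ F 0 = Fintype.card K := by simp [walsh]
  have hcard : ((univ.erase (0 : K)).card : ℤ) = Fintype.card K - 1 := by
    simp [card_erase_of_mem, Nat.cast_sub Fintype.card_pos]
  have hwalsh_sq := sum_walsh_sq hψ F
  rw [← add_sum_erase _ _ (mem_univ 0), hwalsh_zero] at hwalsh_sq
  have hsquares := sum_sum_fiberCard_add_mul_sq F
  rw [← add_sum_erase _ _ (mem_univ 0)] at hsquares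
  simp only [zero_mul, add_zero] at hsquares
  rw [card_mul_sum_sum_filter_eq_sum_sum_fiberCard_pow hψ,
    sum_sum_walsh_mul_walsh_mul_walsh_add hψ, filter_ne',
    ← add_sum_erase univ (fun u => ∑ a, (fiberCard (fun x => F x + u * x) a : ℤ) ^ 3) (mem_univ 0)]
  simp only [zero_mul, add_zero, sum_fiberCard_mul_sub_two_sq, sum_add_distrib, sum_sub_distrib,
    ← mul_sum, sum_const, nsmul_eq_mul, hcard]
  linear_combination 4 * (Fintype.card K : ℤ) * hwalsh_sq + 4 * (Fintype.card K : ℤ) ^ 2 * hsquares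

end OPolynomial

section GaloisField

lemma neg_one_pow_val_add (a b : ZMod 2) :
    (-1 : ℤ) ^ (a + b).val = (-1) ^ a.val * (-1) ^ b.val := by
  revert a b
  decide

noncomputable def traceChar (n : ℕ) : AddChar (GaloisField 2 n) ℤ where
  toFun x := (-1) ^ (tr n x).val
  map_zero_eq_one' := by simp [tr]
  map_add_eq_mul' x y := by simp only [tr, map_add]; exact neg_one_pow_val_add _ _

lemma traceChar_apply (n : ℕ) (x : GaloisField 2 n) : traceChar n x = (-1) ^ (tr n x).val := rfl

lemma isPrimitive_traceChar (n : ℕ) : (traceChar n).IsPrimitive := by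
  refine AddChar.IsPrimitive.of_ne_one fun h => ?_
  obtain ⟨y, hy⟩ := Algebra.trace_surjective (ZMod 2) (GaloisField 2 n) 1
  have := DFunLike.congr_fun h y
  simp only [traceChar_apply, tr, hy, AddChar.one_apply] at this
  exact absurd this (by decide)

lemma W_zero_left (n : ℕ) (F : GaloisField 2 n → GaloisField 2 n) (v : GaloisField 2 n) :
    W n F 0 v = walsh (traceChar n) F v := by
  simp [W, walsh, traceChar_apply, tr]

lemma card_galoisField_two {n : ℕ} (hn : n ≠ 0) : Fintype.card (GaloisField 2 n) = 2 ^ n := by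
  rw [Fintype.card_eq_nat_card, GaloisField.card 2 n hn]

lemma isOPoly_iff (n : ℕ) (F : GaloisField 2 n → GaloisField 2 n) :
    IsOPoly n F ↔ ∀ b ≠ 0, ∀ a,
      fiberCard (fun x => F x + b * x) a = 0 ∨ fiberCard (fun x => F x + b * x) a = 2 := by
  simp [IsOPoly, fiberCard, Nat.card_eq_fintype_card, Fintype.card_subtype]

end GaloisField

lemma natCast_mul_sub_two_sq_eq_zero_iff {m : ℕ} : (m : ℤ) * (m - 2) ^ 2 = 0 ↔ m = 0 ∨ m = 2 := by
  simp only [mul_eq_zero, Int.natCast_eq_zero, pow_eq_zero_iff two_ne_zero, sub_eq_zero]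
  omega

theorem o_polynomial_characterization_corollary (n : ℕ) (hn : 0 < n)
    (F : GaloisField 2 n → GaloisField 2 n) :
    (2 ^ n * (∑ v₁ : GaloisField 2 n, ∑ v₂ : GaloisField 2 n,
        ∑ x ∈ (univ : Finset (GaloisField 2 n × GaloisField 2 n × GaloisField 2 n)).filter
            (fun x => v₁ * x.1 + v₂ * x.2.1 + (v₁ + v₂) * x.2.2 = 0),
          (-1 : ℤ) ^ (tr n (v₁ * F x.1 + v₂ * F x.2.1 + (v₁ + v₂) * F x.2.2)).val)
      - ∑ v₁ : GaloisField 2 n, ∑ v₂ : GaloisField 2 n,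
          W n F 0 v₁ * W n F 0 v₂ * W n F 0 (v₁ + v₂)
      + 2 ^ (n + 2) *
          ∑ v ∈ univ.filter (fun v : GaloisField 2 n => v ≠ 0), W n F 0 v ^ 2
      - 2 ^ (4 * n + 2) + 2 ^ (3 * n + 2) ≥ 0) ∧
    (2 ^ n * (∑ v₁ : GaloisField 2 n, ∑ v₂ : GaloisField 2 n,
        ∑ x ∈ (univ : Finset (GaloisField 2 n × GaloisField 2 n × GaloisField 2 n)).filter
            (fun x => v₁ * x.1 + v₂ * x.2.1 + (v₁ + v₂) * x.2.2 = 0),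
          (-1 : ℤ) ^ (tr n (v₁ * F x.1 + v₂ * F x.2.1 + (v₁ + v₂) * F x.2.2)).val)
      - ∑ v₁ : GaloisField 2 n, ∑ v₂ : GaloisField 2 n,
          W n F 0 v₁ * W n F 0 v₂ * W n F 0 (v₁ + v₂)
      + 2 ^ (n + 2) *
          ∑ v ∈ univ.filter (fun v : GaloisField 2 n => v ≠ 0), W n F 0 v ^ 2
      - 2 ^ (4 * n + 2) + 2 ^ (3 * n + 2) = 0 ↔ IsOPoly n F) := by
  have key := walsh_combination_eq_sum_fiberCard (isPrimitive_traceChar n) F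
  simp only [card_galoisField_two hn.ne', ← W_zero_left, traceChar_apply] at key
  rw [show (2 : ℤ) ^ (n + 2) = 4 * 2 ^ n by ring,
    show (2 : ℤ) ^ (4 * n + 2) = 4 * (2 ^ n) ^ 4 by ring,
    show (2 : ℤ) ^ (3 * n + 2) = 4 * (2 ^ n) ^ 3 by ring]
  push_cast at key
  rw [key]
  refine ⟨by positivity, ?_⟩
  rw [mul_eq_zero, or_iff_right (by positivity), sum_eq_zero_iff_of_nonneg fun _ _ => by positivity,
    isOPoly_iff]
  simp only [mem_erase, mem_univ, and_true]
  refine forall₂_congr fun b _ => ?_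
  rw [sum_eq_zero_iff_of_nonneg fun _ _ => by positivity]
  simp only [mem_univ, true_implies, natCast_mul_sub_two_sq_eq_zero_iff]
end

section
/- For any function F : F_{2^n} → F_{2^n} and any b ∈ F_{2^n}, Σ_{v ∈ F_{2^n}} W_F(bv, v)^2 = 2^n · Σ_{γ ∈ F_{2^n}} |{z ∈ F_{2^n} : F(z+γ) + F(γ) + b·z = 0}|. -/
open scoped Classical
open Finset

/-!
Writing `G x = F x + b x`, the Walsh coefficient `W_F(bv, v)` is the character sum
`∑ₓ ψ(v G(x))` for the primitive additive character `ψ = (-1)^tr`. Squaring and summing over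
`v`, orthogonality of the characters `v ↦ ψ(v c)` counts the pairs `(x, y)` with
`G x + G y = 0`, each with weight `2^n`; putting `x = z + γ, y = γ` and using characteristic two,
`G (z + γ) + G γ = F (z + γ) + F γ + b z`.
-/

namespace AddChar

variable {R : Type*} [CommRing R] [Fintype R] [DecidableEq R]
  {R' : Type*} [CommRing R'] [IsDomain R']
  {ψ : AddChar R R'}

theorem sum_sq_sum_mul_apply_eq_card_mul {ι : Type*} [Fintype ι] (hψ : ψ.IsPrimitive)
    (G : ι → R) :
    ∑ v, (∑ x, ψ (v * G x)) ^ 2 = Fintype.card R * ∑ y, (#{x | G x + G y = 0} : R') := by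
  calc ∑ v, (∑ x, ψ (v * G x)) ^ 2
      = ∑ x, ∑ y, ∑ v, ψ (v * (G x + G y)) := by
        simp_rw [sq, sum_mul_sum, mul_add, map_add_eq_mul]
        rw [sum_comm]
        exact sum_congr rfl fun x _ => sum_comm
    _ = ∑ x, ∑ y, if G x + G y = 0 then (Fintype.card R : R') else 0 := by
        simp_rw [sum_mulShift _ hψ, Nat.cast_ite, Nat.cast_zero]
    _ = Fintype.card R * ∑ y, (#{x | G x + G y = 0} : R') := by
        rw [sum_comm]
        simp_rw [← sum_boole, mul_sum, mul_ite, mul_one, mul_zero]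

end AddChar

section TraceSign

variable (L : Type*) [Field L] [Algebra (ZMod 2) L]

noncomputable def traceSignChar : AddChar L ℤ :=
  (AddChar.zmodChar 2 (by norm_num : (-1 : ℤ) ^ 2 = 1)).compAddMonoidHom
    (Algebra.trace (ZMod 2) L).toAddMonoidHom

variable {L}

theorem traceSignChar_apply (x : L) :
    traceSignChar L x = (-1) ^ (Algebra.trace (ZMod 2) L x).val := by
  simp [traceSignChar, AddChar.zmodChar_apply]

theorem traceSignChar_isPrimitive [Finite L] : (traceSignChar L).IsPrimitive := by
  refine AddChar.IsPrimitive.of_ne_one (AddChar.ne_one_iff.2 ?_)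
  obtain ⟨x, hx⟩ := Algebra.trace_surjective (ZMod 2) L 1
  exact ⟨x, by rw [traceSignChar_apply, hx]; decide⟩

end TraceSign

theorem W_eq_sum_traceSignChar (n : ℕ) (F : GaloisField 2 n → GaloisField 2 n)
    (u v : GaloisField 2 n) :
    W n F u v = ∑ x, traceSignChar _ (v * F x + u * x) := by
  simp [W, tr, traceSignChar_apply, map_add]

theorem nat_card_subtype_add_right_eq_card_filter {G : Type*} [AddGroup G] [Fintype G]
    (P : G → Prop) (γ : G) :
    Nat.card {z // P (z + γ)} = #{x | P x} := by
  rw [← Fintype.card_subtype, ← Nat.card_eq_fintype_card]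
  exact Nat.card_congr ((Equiv.addRight γ).subtypeEquiv fun _ => Iff.rfl)

theorem square_walsh_sum_as_derivative_count (n : ℕ) (hn : 0 < n)
    (F : GaloisField 2 n → GaloisField 2 n) (b : GaloisField 2 n) :
    ∑ v : GaloisField 2 n, W n F (b * v) v ^ 2 =
      2 ^ n * ∑ γ : GaloisField 2 n,
        (Nat.card {z : GaloisField 2 n // F (z + γ) + F γ + b * z = 0} : ℤ) := by
  set G : GaloisField 2 n → GaloisField 2 n := fun x => F x + b * x
  have hW (v : GaloisField 2 n) : W n F (b * v) v = ∑ x, traceSignChar _ (v * G x) := by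
    simp only [W_eq_sum_traceSignChar, G, mul_add, mul_comm b v, mul_assoc]
  have hG (z γ : GaloisField 2 n) : G (z + γ) + G γ = F (z + γ) + F γ + b * z := by
    linear_combination CharTwo.add_self_eq_zero (b * γ)
  have hcard : Fintype.card (GaloisField 2 n) = 2 ^ n := by
    rw [← Nat.card_eq_fintype_card, GaloisField.card 2 n hn.ne']
  simp_rw [hW]
  rw [AddChar.sum_sq_sum_mul_apply_eq_card_mul traceSignChar_isPrimitive, hcard]
  push_cast
  refine congrArg _ (sum_congr rfl fun γ _ => ?_)
  rw [← nat_card_subtype_add_right_eq_card_filter (fun x => G x + G γ = 0) γ]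
  simp only [hG]
end
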